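/- Let A be an algebra with a unary operation ¬ and B ⊆ A. If a ∈ Fig(B) and Fig(B) ≠ A, then there exists b ∈ B such that a ∈ Fig({b}). -/

import Mathlib

/-- Formulas of the algebraic language with a single unary connective ¬,
built as the absolutely free algebra over a countably infinite set of variables. -/
inductive Fm : Type where
  | var : ℕ → Fm
  | neg : Fm → Fm

/-- The {¬}-fragment ⊢_N of classical propositional logic: Γ ⊢_N α iff every
homomorphism h from Fm to the two-element algebra 2_¬ = ⟨{0,1},¬⟩ (¬0 = 1, ¬1 = 0)
with h[Γ] ⊆ {1} satisfies h(α) = 1. -/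
def DerivN (Γ : Set Fm) (α : Fm) : Prop :=
  ∀ h : Fm → Bool, (∀ φ : Fm, h (Fm.neg φ) = !(h φ)) →
    (∀ γ ∈ Γ, h γ = true) → h α = true

/-- F ⊆ A is an S_N-filter of the algebra ⟨A, neg⟩ if for all Γ ∪ {α} ⊆ Fm with
Γ ⊢_N α and every homomorphism h : Fm → A, h[Γ] ⊆ F implies h(α) ∈ F. -/
def IsSNFilter {A : Type*} (neg : A → A) (F : Set A) : Prop :=
  ∀ (Γ : Set Fm) (α : Fm), DerivN Γ α →
    ∀ h : Fm → A, (∀ φ : Fm, h (Fm.neg φ) = neg (h φ)) →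
      (∀ γ ∈ Γ, h γ ∈ F) → h α ∈ F

/-- `Fig neg B` is the least S_N-filter of ⟨A, neg⟩ containing B
(the intersection of all S_N-filters containing B). -/
def Fig {A : Type*} (neg : A → A) (B : Set A) : Set A :=
  {a | ∀ F : Set A, IsSNFilter neg F → B ⊆ F → a ∈ F}

/-!
Every formula is `¬ⁿ x` for a variable `x`, so over `2_¬` a set `Γ` derives `α` exactly when `Γ`
is unsatisfiable (it contains `¬ᵐ x` and `¬ⁿ x` with `m`, `n` of different parity) or some member
of `Γ` has the variable of `α` and the parity of its negation count. Hence every rule of `S_N` has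
a single premise, except the explosive ones, whose premises force the filter to be all of `A`.
So when `Fig B ≠ A`, the union of the filters `Fig {b}`, `b ∈ B`, is itself a filter; it contains
`B` and therefore `Fig B`.
-/

namespace Fm

def base : Fm → ℕ
  | var n => n
  | neg φ => base φ

def depth : Fm → ℕ
  | var _ => 0
  | neg φ => depth φ + 1

def eval {A : Type*} (neg : A → A) (v : ℕ → A) : Fm → A
  | var n => v n
  | Fm.neg φ => neg (eval neg v φ)

theorem hom_apply_eq_iterate {A : Type*} {neg : A → A} {h : Fm → A}
    (hh : ∀ φ, h (Fm.neg φ) = neg (h φ)) (φ : Fm) :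
    h φ = neg^[φ.depth] (h (var φ.base)) := by
  induction φ with
  | var n => rfl
  | neg ψ ih => rw [hh, ih, depth, base, Function.iterate_succ_apply']

theorem eval_apply {A : Type*} (neg : A → A) (v : ℕ → A) (φ : Fm) :
    eval neg v φ = neg^[φ.depth] (v φ.base) :=
  hom_apply_eq_iterate (h := eval neg v) (fun _ => rfl) φ

end Fm

theorem Bool.not_iterate (n : ℕ) (b : Bool) : (!·)^[n] b = xor b n.bodd := by
  induction n with
  | zero => simp
  | succ n ih => rw [Function.iterate_succ_apply', ih, Nat.bodd_succ]; cases b <;> simp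

open Fm

theorem hom_bool_apply {h : Fm → Bool} (hh : ∀ φ, h (Fm.neg φ) = !(h φ)) (φ : Fm) :
    h φ = xor (h (var φ.base)) φ.depth.bodd := by
  rw [hom_apply_eq_iterate hh, Bool.not_iterate]

theorem derivN_of_mem {Γ : Set Fm} {γ α : Fm} (hγ : γ ∈ Γ) (hb : γ.base = α.base)
    (hp : γ.depth.bodd = α.depth.bodd) : DerivN Γ α := by
  intro h hh hΓ
  have := hΓ γ hγ
  rwa [hom_bool_apply hh, hb, hp, ← hom_bool_apply hh] at this

theorem derivN_of_clash {Γ : Set Fm} {γ δ : Fm} (hγ : γ ∈ Γ) (hδ : δ ∈ Γ)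
    (hb : γ.base = δ.base) (hp : γ.depth.bodd ≠ δ.depth.bodd) (α : Fm) : DerivN Γ α := by
  intro h hh hΓ
  have hγ' := hΓ γ hγ
  have hδ' := hΓ δ hδ
  rw [hom_bool_apply hh, hb] at hγ'
  rw [hom_bool_apply hh] at hδ'
  exact absurd (hγ'.trans hδ'.symm) (by cases h (var δ.base) <;> simpa using hp)

theorem DerivN.exists_clash_or_exists_mem {Γ : Set Fm} {α : Fm} (hd : DerivN Γ α) :
    (∃ γ ∈ Γ, ∃ δ ∈ Γ, γ.base = δ.base ∧ γ.depth.bodd ≠ δ.depth.bodd) ∨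
    (∃ γ ∈ Γ, γ.base = α.base ∧ γ.depth.bodd = α.depth.bodd) := by
  classical
  by_contra! ⟨hclash, hmem⟩
  -- Falsify `α` at its variable; every other variable is forced by `Γ`, consistently.
  let v : ℕ → Bool := fun n =>
    xor α.depth.bodd (decide (∃ γ ∈ Γ, γ.base = n ∧ γ.depth.bodd = α.depth.bodd))
  have hv : ∀ φ, eval (!·) v φ = xor (v φ.base) φ.depth.bodd := fun φ =>
    by rw [eval_apply, Bool.not_iterate]
  have hΓ : ∀ γ ∈ Γ, eval (!·) v γ = true := by
    intro γ hγ
    rw [hv]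
    by_cases hp : γ.depth.bodd = α.depth.bodd
    · have : ∃ γ' ∈ Γ, γ'.base = γ.base ∧ γ'.depth.bodd = α.depth.bodd := ⟨γ, hγ, rfl, hp⟩
      simp [v, this, hp]
    · have : ¬∃ γ' ∈ Γ, γ'.base = γ.base ∧ γ'.depth.bodd = α.depth.bodd :=
        fun ⟨γ', hγ', hb, hp'⟩ => hp ((hclash γ hγ γ' hγ' hb.symm).trans hp')
      simpa [v, this] using Ne.symm hp
  have hα := hd (eval (!·) v) (fun _ => rfl) hΓ
  have : ¬∃ γ ∈ Γ, γ.base = α.base ∧ γ.depth.bodd = α.depth.bodd :=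
    fun ⟨γ, hγ, hb, hp⟩ => hmem γ hγ hb hp
  rw [hv] at hα
  simp [v, this] at hα

section Filters

variable {A : Type*} (neg : A → A)

theorem isSNFilter_fig (S : Set A) : IsSNFilter neg (Fig neg S) :=
  fun Γ α hd h hh hΓ F hF hSF => hF Γ α hd h hh fun γ hγ => hΓ γ hγ F hF hSF

theorem subset_fig (S : Set A) : S ⊆ Fig neg S :=
  fun _ hx _ _ hS => hS hx

theorem fig_subset {S G : Set A} (hG : IsSNFilter neg G) (hSG : S ⊆ G) : Fig neg S ⊆ G :=
  fun _ hx => hx G hG hSG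

variable {neg}

theorem IsSNFilter.eq_univ_of_clash {G : Set A} (hG : IsSNFilter neg G) {h : Fm → A}
    (hh : ∀ φ, h (Fm.neg φ) = neg (h φ)) {γ δ : Fm} (hb : γ.base = δ.base)
    (hp : γ.depth.bodd ≠ δ.depth.bodd) (hγ : h γ ∈ G) (hδ : h δ ∈ G) : G = Set.univ := by
  refine Set.eq_univ_of_forall fun c => ?_
  -- Send a variable not occurring in `γ`, `δ` to `c`; the premises keep their values.
  let h' := eval neg (Function.update (fun n => h (var n)) (γ.base + 1) c)
  have hh' : ∀ φ, φ.base ≠ γ.base + 1 → h' φ = h φ := fun φ hφ => by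
    show eval _ _ φ = h φ
    rw [eval_apply, Function.update_of_ne hφ, ← hom_apply_eq_iterate hh]
  have hγ' : h' γ = h γ := hh' γ (by omega)
  have hδ' : h' δ = h δ := hh' δ (by omega)
  have := hG {γ, δ} (var (γ.base + 1)) (derivN_of_clash (by simp) (by simp) hb hp _) h'
    (fun _ => rfl) (by rintro _ (rfl | rfl) <;> simpa [hγ', hδ'])
  simpa [h', eval] using this

theorem isSNFilter_biUnion_fig {B : Set A} (hne : Fig neg B ≠ Set.univ) :
    IsSNFilter neg (⋃ b ∈ B, Fig neg {b}) := by
  intro Γ α hd h hh hΓ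
  have hsub : (⋃ b ∈ B, Fig neg {b}) ⊆ Fig neg B := Set.iUnion₂_subset fun b hb =>
    fig_subset neg (isSNFilter_fig neg B) (Set.singleton_subset_iff.2 (subset_fig neg B hb))
  rcases hd.exists_clash_or_exists_mem with ⟨γ, hγ, δ, hδ, hb, hp⟩ | ⟨γ, hγ, hb, hp⟩
  · exact absurd ((isSNFilter_fig neg B).eq_univ_of_clash hh hb hp (hsub (hΓ γ hγ))
      (hsub (hΓ δ hδ))) hne
  · obtain ⟨b, hbB, hγb⟩ := Set.mem_iUnion₂.1 (hΓ γ hγ)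
    exact Set.mem_iUnion₂.2 ⟨b, hbB, isSNFilter_fig neg {b} {γ} α
      (derivN_of_mem rfl hb hp) h hh (by simpa using hγb)⟩

end Filters

/-- (B6) If a ∈ Fig(B) and Fig(B) ≠ A, then there is b ∈ B with a ∈ Fig({b}). -/
theorem stmt14 {A : Type*} (neg : A → A) (B : Set A) (a : A)
    (ha : a ∈ Fig neg B) (hne : Fig neg B ≠ Set.univ) :
    ∃ b ∈ B, a ∈ Fig neg {b} := by
  have := ha _ (isSNFilter_biUnion_fig hne) fun b hb =>
    Set.mem_iUnion₂.2 ⟨b, hb, subset_fig neg {b} rfl⟩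
  simpa only [Set.mem_iUnion₂, exists_prop] using this
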